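/- arXiv:1607.04143 — 2 statements merged into one kernel-verified Lean document; each statement's English description precedes it below -/
import Mathlib

section
/- For the probability-of-error distortion and every Δ with Δ_min ≤ Δ ≤ Δ_max, the minimum defining R_A(Δ) is attained by some feasible joint pmf Q that additionally satisfies the longer Markov chain X_{A^c} — X_A — Y_A — Y_{A^c}: that is, there exists a feasible Q with E_Q[1(X ≠ Y)] ≤ Δ, I_Q(X_A ∧ Y) = R_A(Δ), and under Q both X_{A^c} — X_A — (Y_A, Y_{A^c}) and (X_A, X_{A^c}) — Y_A — Y_{A^c} are Markov chains. -/
noncomputable section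

/-- A probability mass function on a finite type. -/
def IsPMF {T : Type*} [Fintype T] (p : T → ℝ) : Prop :=
  (∀ t, 0 ≤ p t) ∧ ∑ t, p t = 1

/-- Mutual information of a joint pmf `Q` on a product of two finite types;
terms with `Q p = 0` vanish since `0 * log _ = 0`. -/
def mutInfo {α β : Type*} [Fintype α] [Fintype β] (Q : α × β → ℝ) : ℝ :=
  ∑ p : α × β, Q p * Real.log (Q p / ((∑ b, Q (p.1, b)) * (∑ a, Q (a, p.2))))

variable {XA XAc Y : Type*} [Fintype XA] [Fintype XAc] [Fintype Y]

/-- The `𝒳_A`-marginal of `P`. -/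
def margXA (P : XA × XAc → ℝ) (xa : XA) : ℝ := ∑ x', P (xa, x')

/-- Conditional pmf `P_{X_{A^c}|X_A}(x'|xa)`. -/
def condP (P : XA × XAc → ℝ) (x' : XAc) (xa : XA) : ℝ := P (xa, x') / margXA P xa

/-- The modified distortion measure `d_A`. -/
def dA (P : XA × XAc → ℝ) (d : XA × XAc → Y → ℝ) (xa : XA) (y : Y) : ℝ :=
  ∑ x', condP P x' xa * d (xa, x') y

/-- Feasible joint pmfs: a pmf whose `(𝒳_A × 𝒳_{A^c})`-marginal equals `P` and
satisfying the Markov chain `X_{A^c} — X_A — Y`, i.e.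
`Q(x_A,x_{A^c},y) ⬝ Q_{X_A}(x_A) = P(x_A,x_{A^c}) ⬝ Q_{X_A Y}(x_A,y)`. -/
def Feasible (P : XA × XAc → ℝ) (Q : (XA × XAc) × Y → ℝ) : Prop :=
  IsPMF Q ∧ (∀ x, ∑ y, Q (x, y) = P x) ∧
    ∀ xa x' y, Q ((xa, x'), y) * (∑ x'', ∑ y', Q ((xa, x''), y')) =
      P (xa, x') * (∑ x'', Q ((xa, x''), y))

/-- Expected distortion of `Q`. -/
def expDist (d : XA × XAc → Y → ℝ) (Q : (XA × XAc) × Y → ℝ) : ℝ :=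
  ∑ p : (XA × XAc) × Y, Q p * d p.1 p.2

/-- Marginal of `Q` on `(X_A, Y)`. -/
def margAY (Q : (XA × XAc) × Y → ℝ) : XA × Y → ℝ :=
  fun p => ∑ x', Q ((p.1, x'), p.2)

variable [DecidableEq XA] [DecidableEq XAc]

/-- The probability-of-error distortion measure on `𝒴 = 𝒳_A × 𝒳_{A^c}`. -/
def dErr : XA × XAc → XA × XAc → ℝ := fun x y => if x = y then 0 else 1

/-- `α(x_A) = max_{x' ∈ 𝒳_{A^c}} P_{X_{A^c}|X_A}(x'|x_A)`. -/
def alphaF [Nonempty XAc] (P : XA × XAc → ℝ) (xa : XA) : ℝ :=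
  Finset.univ.sup' Finset.univ_nonempty (fun x' => condP P x' xa)

/-- The fixed-set sampling rate distortion function `R_A(Δ)` for the
probability-of-error distortion. -/
def RAerr (P : XA × XAc → ℝ) (Δ : ℝ) : ℝ :=
  sInf {r | ∃ Q : (XA × XAc) × (XA × XAc) → ℝ,
    Feasible P Q ∧ expDist dErr Q ≤ Δ ∧ mutInfo (margAY Q) = r}

/-!
The constraint set is compact and contains the test channel `Y = (X_A, m(X_A))`, where `m(x_A)`
is a most likely value of `X_{A^c}` given `x_A`; its error is exactly `Δ_min`. Mutual information
is continuous on pmfs, so a minimiser `Q` exists. Replacing its `Y_{A^c}` by `m(Y_A)` keeps the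
Markov chain `X_{A^c} — X_A — Y`, and it can only lower the error, because under that chain
`Q((x_A, x'), y)` is monotone in `P(x_A, x')`. It cannot raise `I(X_A ∧ Y)` either: merging the
values of `Y_{A^c}` does not increase mutual information (log-sum inequality), and re-attaching
a function of `Y_A` does not change it. Finally, once `Y_{A^c}` is a function of `Y_A`, the longer
chain `X — Y_A — Y_{A^c}` holds.
-/

open Finset Real

section MutualInformation

variable {α β γ : Type*} [Fintype α] [Fintype β] [Fintype γ]

theorem sum_mul_log_div_sum_le {ι : Type*} [Fintype ι] {a b : ι → ℝ} (ha : ∀ i, 0 ≤ a i)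
    (hb : ∀ i, 0 ≤ b i) (hab : ∀ i, b i = 0 → a i = 0) :
    (∑ i, a i) * log ((∑ i, a i) / ∑ i, b i) ≤ ∑ i, a i * log (a i / b i) := by
  set B := ∑ i, b i
  rcases (sum_nonneg fun i _ => hb i).eq_or_lt with hB | hB
  · have hb0 := (Fintype.sum_eq_zero_iff_of_nonneg hb).1 hB.symm
    simp [hab _ (congrFun hb0 _)]
  · have hw : ∀ i, b i * (a i / b i) = a i := fun i => by
      rw [mul_comm, div_mul_cancel_of_imp (hab i)]
    have key := convexOn_mul_log.map_sum_le (t := univ) (w := fun i => b i / B)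
      (p := fun i => a i / b i) (fun i _ => div_nonneg (hb i) hB.le)
      (by rw [← sum_div, div_self hB.ne']) (fun i _ => div_nonneg (ha i) (hb i))
    simp only [smul_eq_mul, ← mul_assoc, div_mul_eq_mul_div _ B, ← sum_div, hw] at key
    exact (div_le_div_iff_of_pos_right hB).1 key

theorem mutInfo_eq_sum_negMulLog {M : α × β → ℝ} (hM : ∀ p, 0 ≤ M p) :
    mutInfo M = ∑ a, negMulLog (∑ b, M (a, b)) + ∑ b, negMulLog (∑ a, M (a, b)) -
      ∑ p, negMulLog (M p) := by
  have hterm : ∀ p : α × β, M p * log (M p / ((∑ b, M (p.1, b)) * ∑ a, M (a, p.2))) =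
      M p * log (M p) - M p * log (∑ b, M (p.1, b)) - M p * log (∑ a, M (a, p.2)) := by
    rintro ⟨a, b⟩
    rcases (hM (a, b)).eq_or_lt with h | h
    · simp [← h]
    · have hr : 0 < ∑ b', M (a, b') :=
        h.trans_le (single_le_sum (fun b' _ => hM (a, b')) (mem_univ b))
      have hc : 0 < ∑ a', M (a', b) :=
        h.trans_le (single_le_sum (fun a' _ => hM (a', b)) (mem_univ a))
      rw [log_div h.ne' (by positivity), log_mul hr.ne' hc.ne']
      ring
  simp only [mutInfo, hterm, sum_sub_distrib, negMulLog, neg_mul, sum_neg_distrib]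
  rw [Fintype.sum_prod_type (fun p => M p * log (∑ b, M (p.1, b))),
    Fintype.sum_prod_type_right (fun p => M p * log (∑ a, M (a, p.2)))]
  simp only [← sum_mul]
  ring

theorem continuousOn_mutInfo : ContinuousOn (mutInfo : (α × β → ℝ) → ℝ) {M | ∀ p, 0 ≤ M p} :=
  ContinuousOn.congr (by fun_prop : Continuous fun M : α × β → ℝ =>
      ∑ a, negMulLog (∑ b, M (a, b)) + ∑ b, negMulLog (∑ a, M (a, b)) -
        ∑ p, negMulLog (M p)).continuousOn
    fun _ hM => mutInfo_eq_sum_negMulLog hM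

theorem mutInfo_sum_snd_le {M : α × (β × γ) → ℝ} (hM : ∀ p, 0 ≤ M p) :
    mutInfo (fun q : α × β => ∑ c, M (q.1, (q.2, c))) ≤ mutInfo M := by
  simp only [mutInfo, Fintype.sum_prod_type]
  gcongr with a _ b _
  set R := ∑ b', ∑ c, M (a, (b', c))
  have hR : ∀ c, M (a, (b, c)) ≤ R := fun c =>
    (single_le_sum (f := fun c' => M (a, (b, c'))) (fun c' _ => hM _) (mem_univ c)).trans
      (single_le_sum (f := fun b' => ∑ c, M (a, (b', c))) (fun b' _ => sum_nonneg fun c _ => hM _)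
        (mem_univ b))
  have hC : ∀ c, M (a, (b, c)) ≤ ∑ a', M (a', (b, c)) := fun c =>
    single_le_sum (fun a' _ => hM (a', (b, c))) (mem_univ a)
  rw [sum_comm (γ := α), mul_sum]
  refine sum_mul_log_div_sum_le (fun c => hM _)
    (fun c => mul_nonneg ((hM _).trans (hR c)) ((hM _).trans (hC c))) fun c h => ?_
  rcases mul_eq_zero.1 h with h | h
  · exact le_antisymm (h ▸ hR c) (hM _)
  · exact le_antisymm (h ▸ hC c) (hM _)

theorem mutInfo_graph [DecidableEq γ] (N : α × β → ℝ) (g : β → γ) :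
    mutInfo (fun p : α × (β × γ) => if p.2.2 = g p.2.1 then N (p.1, p.2.1) else 0) =
      mutInfo N := by
  simp [mutInfo, Fintype.sum_prod_type, ite_mul]

end MutualInformation

section Feasible

variable {α β γ : Type*} [Fintype α] [Fintype β] [Fintype γ]

theorem IsPMF.le_one {T : Type*} [Fintype T] {p : T → ℝ} (hp : IsPMF p) (t : T) : p t ≤ 1 :=
  hp.2 ▸ single_le_sum (fun t _ => hp.1 t) (mem_univ t)

theorem isCompact_setOf_feasible (P : α × β → ℝ) :
    IsCompact {Q : (α × β) × γ → ℝ | Feasible P Q} := by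
  refine isCompact_Icc.of_isClosed_subset ?_ fun Q hQ => ⟨hQ.1.1, hQ.1.le_one⟩
  simp only [Feasible, IsPMF, Set.ofPred_and, Set.ofPred_forall]
  refine .inter (.inter ?_ ?_) (.inter ?_ ?_)
  · exact isClosed_iInter fun p => isClosed_le continuous_const (continuous_apply p)
  · exact isClosed_eq (by fun_prop) continuous_const
  · exact isClosed_iInter fun x => isClosed_eq (by fun_prop) continuous_const
  · exact isClosed_iInter fun a => isClosed_iInter fun b => isClosed_iInter fun y =>
      isClosed_eq (by fun_prop) (by fun_prop)

theorem exists_isMinOn_mutInfo_margAY {P : α × β → ℝ} (d : α × β → γ → ℝ) {Δ : ℝ}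
    (h : ∃ Q, Feasible P Q ∧ expDist d Q ≤ Δ) :
    ∃ Q ∈ {Q | Feasible P Q ∧ expDist d Q ≤ Δ},
      IsMinOn (fun Q => mutInfo (margAY Q)) {Q | Feasible P Q ∧ expDist d Q ≤ Δ} Q := by
  have hS : IsCompact {Q | Feasible P Q ∧ expDist d Q ≤ Δ} :=
    (isCompact_setOf_feasible P).inter_right
      (isClosed_le (by unfold expDist; fun_prop : Continuous (expDist d)) continuous_const)
  refine hS.exists_isMinOn h (continuousOn_mutInfo.comp
    (by unfold margAY; fun_prop : Continuous fun Q : (α × β) × γ → ℝ => margAY Q).continuousOn ?_)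
  exact fun Q hQ p => sum_nonneg fun _ _ => hQ.1.1.1 _

theorem Feasible.apply_le_of_le {P : α × β → ℝ} {Q : (α × β) × γ → ℝ} (hQ : Feasible P Q)
    {a : α} {b b' : β} (h : P (a, b) ≤ P (a, b')) (y : γ) : Q ((a, b), y) ≤ Q ((a, b'), y) := by
  obtain ⟨⟨hQ0, -⟩, -, hmarkov⟩ := hQ
  set T := ∑ b'', ∑ y', Q ((a, b''), y')
  have hT : Q ((a, b), y) ≤ T :=
    (single_le_sum (f := fun y' => Q ((a, b), y')) (fun _ _ => hQ0 _) (mem_univ y)).trans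
      (single_le_sum (f := fun b'' => ∑ y', Q ((a, b''), y'))
        (fun _ _ => sum_nonneg fun _ _ => hQ0 _) (mem_univ b))
  rcases ((hQ0 _).trans hT).eq_or_lt with hT0 | hT0
  · exact (hT.trans hT0.ge).trans (hQ0 _)
  · refine le_of_mul_le_mul_right ?_ hT0
    rw [hmarkov, hmarkov]
    exact mul_le_mul_of_nonneg_right h (sum_nonneg fun _ _ => hQ0 _)

def detChannel [DecidableEq γ] (P : α × β → ℝ) (f : α → γ) : (α × β) × γ → ℝ :=
  fun p => if p.2 = f p.1.1 then P p.1 else 0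

theorem feasible_detChannel [DecidableEq γ] {P : α × β → ℝ} (hP : IsPMF P) (f : α → γ) :
    Feasible P (detChannel P f) := by
  have hmarg : ∀ x, ∑ y, detChannel P f (x, y) = P x := by simp [detChannel]
  refine ⟨⟨fun p => ?_, by rw [Fintype.sum_prod_type]; simpa only [hmarg] using hP.2⟩, hmarg, ?_⟩
  · unfold detChannel
    split_ifs
    exacts [hP.1 _, le_rfl]
  · intro a b y
    by_cases hy : y = f a <;> simp [detChannel, hy, mul_comm]

end Feasible

section Collapse

variable {α β γ δ : Type*} [DecidableEq δ] (g : γ → δ) (Q : (α × β) × (γ × δ) → ℝ)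

def collapseSnd [Fintype δ] : (α × β) × (γ × δ) → ℝ :=
  fun p => if p.2.2 = g p.2.1 then ∑ d, Q (p.1, (p.2.1, d)) else 0

variable [Fintype δ]

theorem sum_collapseSnd_snd (x : α × β) (c : γ) :
    ∑ d, collapseSnd g Q (x, (c, d)) = ∑ d, Q (x, (c, d)) := by
  simp [collapseSnd]

theorem sum_collapseSnd [Fintype γ] (x : α × β) :
    ∑ y, collapseSnd g Q (x, y) = ∑ y, Q (x, y) := by
  simp only [Fintype.sum_prod_type (f := fun y => collapseSnd g Q (x, y)),
    Fintype.sum_prod_type (f := fun y => Q (x, y)), sum_collapseSnd_snd]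

theorem Feasible.collapseSnd [Fintype α] [Fintype β] [Fintype γ] {P : α × β → ℝ}
    (hQ : Feasible P Q) : Feasible P (collapseSnd g Q) := by
  obtain ⟨⟨hQ0, hQ1⟩, hmarg, hmarkov⟩ := hQ
  refine ⟨⟨fun p => ?_, ?_⟩, fun x => (sum_collapseSnd g Q x).trans (hmarg x), ?_⟩
  · unfold _root_.collapseSnd
    split_ifs
    exacts [sum_nonneg fun _ _ => hQ0 _, le_rfl]
  · rwa [Fintype.sum_prod_type, sum_congr rfl fun x _ => sum_collapseSnd g Q x,
      ← Fintype.sum_prod_type]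
  · rintro a b ⟨c, d⟩
    simp only [sum_collapseSnd]
    by_cases hd : d = g c
    · simp only [_root_.collapseSnd, hd, if_true, sum_mul, hmarkov, ← mul_sum]
      rw [sum_comm]
    · simp [_root_.collapseSnd, hd]

theorem collapseSnd_markov [Fintype α] [Fintype β] (x : α × β) (c : γ) (d : δ) :
    collapseSnd g Q (x, (c, d)) * ∑ x', ∑ d', collapseSnd g Q (x', (c, d')) =
      (∑ d', collapseSnd g Q (x, (c, d'))) * ∑ x', collapseSnd g Q (x', (c, d)) := by
  by_cases hd : d = g c <;> simp [collapseSnd, hd]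

theorem margAY_collapseSnd [Fintype β] :
    margAY (collapseSnd g Q) =
      fun p => if p.2.2 = g p.2.1 then ∑ d, margAY Q (p.1, (p.2.1, d)) else 0 := by
  ext ⟨a, c, d⟩
  by_cases hd : d = g c <;> simp [margAY, collapseSnd, hd, sum_comm (γ := β)]

theorem mutInfo_margAY_collapseSnd_le [Fintype α] [Fintype β] [Fintype γ] (hQ : ∀ p, 0 ≤ Q p) :
    mutInfo (margAY (collapseSnd g Q)) ≤ mutInfo (margAY Q) := by
  rw [margAY_collapseSnd]
  exact (mutInfo_graph (fun q : α × γ => ∑ d, margAY Q (q.1, (q.2, d))) g).trans_le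
    (mutInfo_sum_snd_le fun p => sum_nonneg fun _ _ => hQ _)

end Collapse

section Mode

variable {α β : Type*} [Nonempty β]

def mode [Finite β] (P : α × β → ℝ) (a : α) : β :=
  (Finite.exists_max fun b => P (a, b)).choose

theorem le_mode [Finite β] (P : α × β → ℝ) (a : α) (b : β) : P (a, b) ≤ P (a, mode P a) :=
  (Finite.exists_max fun b => P (a, b)).choose_spec b

theorem margXA_mul_alphaF [Fintype β] {P : α × β → ℝ} {a : α} (h : 0 < margXA P a) :
    margXA P a * alphaF P a = P (a, mode P a) := by
  have : alphaF P a = P (a, mode P a) / margXA P a :=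
    le_antisymm (sup'_le _ _ fun b _ => div_le_div_of_nonneg_right (le_mode P a b) h.le)
      (le_sup' (fun b => condP P b a) (mem_univ _))
  rw [this, mul_div_cancel₀ _ h.ne']

end Mode

section ErrorDistortion

variable {α β : Type*} [Fintype α] [Fintype β] [DecidableEq α] [DecidableEq β]

theorem expDist_dErr (Q : (α × β) × (α × β) → ℝ) :
    expDist dErr Q = ∑ p, Q p - ∑ x, Q (x, x) := by
  have h : ∀ p : (α × β) × (α × β), Q p * dErr p.1 p.2 = Q p - if p.1 = p.2 then Q p else 0 :=
    fun p => by by_cases hp : p.1 = p.2 <;> simp [dErr, hp]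
  rw [expDist, sum_congr rfl fun p _ => h p, sum_sub_distrib, Fintype.sum_prod_type
    (f := fun p : (α × β) × (α × β) => if p.1 = p.2 then Q p else 0)]
  simp

theorem expDist_dErr_detChannel_mode [Nonempty β] {P : α × β → ℝ} (hP : IsPMF P) :
    expDist dErr (detChannel P fun a => (a, mode P a)) = 1 - ∑ a, P (a, mode P a) := by
  rw [expDist_dErr, (feasible_detChannel hP _).1.2]
  simp [detChannel, Fintype.sum_prod_type]

theorem expDist_dErr_collapseSnd_mode_le [Nonempty β] {P : α × β → ℝ}
    {Q : (α × β) × (α × β) → ℝ} (hQ : Feasible P Q) :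
    expDist dErr (collapseSnd (mode P) Q) ≤ expDist dErr Q := by
  rw [expDist_dErr, expDist_dErr, (hQ.collapseSnd _).1.2, hQ.1.2, Fintype.sum_prod_type,
    Fintype.sum_prod_type]
  refine sub_le_sub_left (sum_le_sum fun a _ => ?_) 1
  simp only [collapseSnd, sum_ite_eq', mem_univ, if_true]
  exact sum_le_sum fun b _ => hQ.apply_le_of_le (le_mode P a b) _

theorem mutInfo_margAY_eq_RAerr {P : α × β → ℝ} {Δ : ℝ} {Q : (α × β) × (α × β) → ℝ}
    (hQ : Feasible P Q) (hQΔ : expDist dErr Q ≤ Δ)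
    (hle : ∀ Q', Feasible P Q' → expDist dErr Q' ≤ Δ → mutInfo (margAY Q) ≤ mutInfo (margAY Q')) :
    mutInfo (margAY Q) = RAerr P Δ :=
  Eq.symm <| IsLeast.csInf_eq
    ⟨⟨Q, hQ, hQΔ, rfl⟩, by rintro _ ⟨Q', hQ', hQ'Δ, rfl⟩; exact hle Q' hQ' hQ'Δ⟩

end ErrorDistortion

theorem stmt7_general [Nonempty XAc]
    (P : XA × XAc → ℝ) (hP : IsPMF P) (hfull : ∀ x, 0 < P x) (Δ : ℝ)
    (hmin : 1 - ∑ xa, margXA P xa * alphaF P xa ≤ Δ) :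
    ∃ Q : (XA × XAc) × (XA × XAc) → ℝ,
      Feasible P Q ∧ expDist dErr Q ≤ Δ ∧ mutInfo (margAY Q) = RAerr P Δ ∧
      (∀ (x : XA × XAc) (ya : XA) (yac : XAc),
        Q (x, (ya, yac)) * (∑ x'' : XA × XAc, ∑ y2, Q (x'', (ya, y2))) =
          (∑ y2, Q (x, (ya, y2))) * (∑ x'' : XA × XAc, Q (x'', (ya, yac)))) := by
  have hbase : ∃ Q, Feasible P Q ∧ expDist dErr Q ≤ Δ := by
    refine ⟨_, feasible_detChannel hP fun a => (a, mode P a), ?_⟩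
    rwa [expDist_dErr_detChannel_mode hP, ← sum_congr rfl fun a _ =>
      margXA_mul_alphaF (sum_pos (fun b _ => hfull (a, b)) univ_nonempty)]
  obtain ⟨Q, ⟨hQ, hQΔ⟩, hQmin⟩ := exists_isMinOn_mutInfo_margAY dErr hbase
  have hQ' := hQ.collapseSnd (mode P)
  have hQ'Δ := (expDist_dErr_collapseSnd_mode_le hQ).trans hQΔ
  refine ⟨_, hQ', hQ'Δ, mutInfo_margAY_eq_RAerr hQ' hQ'Δ fun R hR hRΔ => ?_,
    collapseSnd_markov _ _⟩
  exact (mutInfo_margAY_collapseSnd_le _ Q hQ.1.1).trans (hQmin ⟨hR, hRΔ⟩)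

/-- for the probability-of-error distortion and `Δ_min ≤ Δ ≤ Δ_max`, the
minimum defining `R_A(Δ)` is attained by a feasible pmf satisfying the longer Markov
chain `X_{A^c} — X_A — Y_A — Y_{A^c}`. -/
theorem stmt7 [Nonempty XA] [Nonempty XAc]
    (P : XA × XAc → ℝ) (hP : IsPMF P) (hfull : ∀ x, 0 < P x) (Δ : ℝ)
    (hmin : 1 - ∑ xa, margXA P xa * alphaF P xa ≤ Δ)
    (hmax : Δ ≤ 1 - Finset.univ.sup' Finset.univ_nonempty P) :
    ∃ Q : (XA × XAc) × (XA × XAc) → ℝ,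
      Feasible P Q ∧ expDist dErr Q ≤ Δ ∧ mutInfo (margAY Q) = RAerr P Δ ∧
      (∀ (x : XA × XAc) (ya : XA) (yac : XAc),
        Q (x, (ya, yac)) * (∑ x'' : XA × XAc, ∑ y2, Q (x'', (ya, y2))) =
          (∑ y2, Q (x, (ya, y2))) * (∑ x'' : XA × XAc, Q (x'', (ya, yac)))) :=
  stmt7_general P hP hfull Δ hmin
end
end

section
/- For every Δ with Δ_min ≤ Δ ≤ Δ_max, R_i(Δ) = min over pmfs P_S on 𝒜_k and families of reals (Δ_A, A ∈ 𝒜_k) with Δ_A ≥ Δ_min,A for all A and Σ_{A ∈ 𝒜_k} P_S(A) Δ_A ≤ Δ, of Σ_{A ∈ 𝒜_k} P_S(A) R_A(Δ_A). Here Δ_min = min_{A ∈ 𝒜_k} Δ_min,A and Δ_max = min_{y ∈ 𝒴} Σ_x P(x) d(x,y). -/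
noncomputable section

/-- The family `𝒜_k` of `k`-element subsets of `{1, …, m}`. -/
abbrev SetsK (m k : ℕ) := {A : Finset (Fin m) // A.card = k}

variable {m : ℕ} {X : Fin m → Type} [∀ i, Fintype (X i)] [∀ i, DecidableEq (X i)]
  [∀ i, Nonempty (X i)] {Y : Type} [Fintype Y] [Nonempty Y]

/-- Restriction of `x ∈ 𝒳_ℳ` to the coordinates in `A`. -/
def restr (A : Finset (Fin m)) (x : ∀ i, X i) : ∀ i : A, X i.1 := fun i => x i.1

/-- The marginal pmf `P_{X_A}` of the coordinates in `A`. -/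
def margA (P : (∀ i, X i) → ℝ) (A : Finset (Fin m)) (xA : ∀ i : A, X i.1) : ℝ :=
  ∑ x : ∀ i, X i, if restr A x = xA then P x else 0

/-- The modified distortion `d_A(x_A, y)`. -/
def dAk (P : (∀ i, X i) → ℝ) (d : (∀ i, X i) → Y → ℝ) (A : Finset (Fin m))
    (xA : ∀ i : A, X i.1) (y : Y) : ℝ :=
  (∑ x : ∀ i, X i, if restr A x = xA then P x * d x y else 0) / margA P A xA

/-- The fixed-set rate distortion function `R_A(Δ)`: the minimum of `I(X_A ∧ Y)` over
joint pmfs of `(X_A, Y)` with first marginal `P_{X_A}` and `E[d_A(X_A,Y)] ≤ Δ`. -/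
def RAk (P : (∀ i, X i) → ℝ) (d : (∀ i, X i) → Y → ℝ) (A : Finset (Fin m)) (Δ : ℝ) : ℝ :=
  sInf {r | ∃ Q : (∀ i : A, X i.1) × Y → ℝ, IsPMF Q ∧
    (∀ xA, ∑ y, Q (xA, y) = margA P A xA) ∧
    (∑ p : (∀ i : A, X i.1) × Y, Q p * dAk P d A p.1 p.2) ≤ Δ ∧ mutInfo Q = r}

/-- `Δ_min,A = Σ_{x_A} P_{X_A}(x_A) min_y d_A(x_A, y)`. -/
def DminA (P : (∀ i, X i) → ℝ) (d : (∀ i, X i) → Y → ℝ) (A : Finset (Fin m)) : ℝ :=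
  ∑ xA : ∀ i : A, X i.1,
    margA P A xA * Finset.univ.inf' Finset.univ_nonempty (fun y => dAk P d A xA y)

/-- A reconstruction kernel `W(·|A, x_A)`: a pmf on `𝒴` for each `A ∈ 𝒜_k` and each
value `x_A` of the sampled coordinates. -/
def IsKernelW (k : ℕ) (W : ∀ A : SetsK m k, (∀ i : A.1, X i.1) → Y → ℝ) : Prop :=
  ∀ A xA, IsPMF (W A xA)

/-- The conditional mutual information `I(X_S ∧ Y | S) = Σ_A P_S(A) I(X_A ∧ Y | S = A)`
for a `k`-IRS `(P_S, W)`. -/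
def condMI (k : ℕ) (P : (∀ i, X i) → ℝ) (PS : SetsK m k → ℝ)
    (W : ∀ A : SetsK m k, (∀ i : A.1, X i.1) → Y → ℝ) : ℝ :=
  ∑ A : SetsK m k, PS A *
    mutInfo (fun p : (∀ i : A.1, X i.1) × Y => margA P A.1 p.1 * W A p.1 p.2)

/-- The expected distortion `E[d(X,Y)]` for a `k`-IRS `(P_S, W)`. -/
def expDistIRS (k : ℕ) (P : (∀ i, X i) → ℝ) (d : (∀ i, X i) → Y → ℝ)
    (PS : SetsK m k → ℝ) (W : ∀ A : SetsK m k, (∀ i : A.1, X i.1) → Y → ℝ) : ℝ :=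
  ∑ A : SetsK m k, ∑ x : ∀ i, X i, ∑ y, PS A * P x * W A (restr A.1 x) y * d x y

/-- The SRDf `R_i(Δ)` for a `k`-IRS. -/
def Ri (k : ℕ) (P : (∀ i, X i) → ℝ) (d : (∀ i, X i) → Y → ℝ) (Δ : ℝ) : ℝ :=
  sInf {r | ∃ (PS : SetsK m k → ℝ) (W : ∀ A : SetsK m k, (∀ i : A.1, X i.1) → Y → ℝ),
    IsPMF PS ∧ IsKernelW k W ∧ expDistIRS k P d PS W ≤ Δ ∧ condMI k P PS W = r}

/-!
An IRS `(P_S, W)` is the same thing as a pmf `P_S` together with, for each `A`, a joint pmf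
`Q_A = P_{X_A} · W(·|A, ·)` of `(X_A, Y)` with first marginal `P_{X_A}`; since `P` has full
support, `W` is recovered from `Q_A` by dividing by `P_{X_A}`. Averaging `d(x, y)` over the
fibre of `x_A` gives `d_A(x_A, y)`, so `E[d(X, Y)] = Σ_A P_S(A) E_{Q_A}[d_A]`, while
`I(X_S ∧ Y | S) = Σ_A P_S(A) I(Q_A)` by definition. An IRS therefore yields the allocation
`Δ_A = E_{Q_A}[d_A]` with `Σ_A P_S(A) R_A(Δ_A) ≤ I(X_S ∧ Y | S)`; conversely, gluing
`ε`-optimal joints for `R_A(Δ_A)` gives an IRS within `ε` of `Σ_A P_S(A) R_A(Δ_A)`.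
-/

theorem csInf_eq_csInf_of_forall_exists_le_add {S T : Set ℝ} (hS : BddBelow S) (hT : BddBelow T)
    (hST : ∀ t ∈ T, ∀ ε > 0, ∃ s ∈ S, s ≤ t + ε) (hTS : ∀ s ∈ S, ∃ t ∈ T, t ≤ s) :
    sInf S = sInf T := by
  rcases T.eq_empty_or_nonempty with rfl | hTne
  · have : S = ∅ := Set.eq_empty_of_forall_notMem fun s hs => by
      obtain ⟨t, ht, -⟩ := hTS s hs
      exact ht
    rw [this]
  obtain ⟨t, ht⟩ := hTne
  obtain ⟨s, hs, -⟩ := hST t ht 1 one_pos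
  refine le_antisymm (le_csInf ⟨t, ht⟩ fun t ht => ?_) (le_csInf ⟨s, hs⟩ fun s hs => ?_)
  · refine le_of_forall_pos_le_add fun ε hε => ?_
    obtain ⟨s, hs, hst⟩ := hST t ht ε hε
    exact (csInf_le hS hs).trans hst
  · obtain ⟨t, ht, hts⟩ := hTS s hs
    exact (csInf_le hT ht).trans hts

lemma sub_le_mul_log_div {q r : ℝ} (hq : 0 ≤ q) (hr : 0 < r) : q - r ≤ q * Real.log (q / r) :=
  calc q - r = r * (q / r - 1) := by field_simp
    _ ≤ r * (q / r * Real.log (q / r)) :=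
      mul_le_mul_of_nonneg_left (Real.self_sub_one_le_mul_log (div_nonneg hq hr.le)) hr.le
    _ = q * Real.log (q / r) := by field_simp

section

open Finset

lemma mutInfo_nonneg {α β : Type*} [Fintype α] [Fintype β] {Q : α × β → ℝ} (hQ : IsPMF Q) :
    0 ≤ mutInfo Q := by
  set m₁ : α → ℝ := fun a => ∑ b, Q (a, b)
  set m₂ : β → ℝ := fun b => ∑ a, Q (a, b)
  have hle₁ (p : α × β) : Q p ≤ m₁ p.1 :=
    single_le_sum (f := fun b => Q (p.1, b)) (fun b _ => hQ.1 _) (mem_univ p.2)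
  have hle₂ (p : α × β) : Q p ≤ m₂ p.2 :=
    single_le_sum (f := fun a => Q (a, p.2)) (fun a _ => hQ.1 _) (mem_univ p.1)
  have hsum₁ : ∑ a, m₁ a = 1 := by rw [← hQ.2, Fintype.sum_prod_type]
  have hsum₂ : ∑ b, m₂ b = 1 := by rw [← hQ.2, Fintype.sum_prod_type, sum_comm]
  have hprod : ∑ p : α × β, m₁ p.1 * m₂ p.2 = 1 := by
    rw [Fintype.sum_prod_type, ← sum_mul_sum, hsum₁, hsum₂, one_mul]
  calc (0 : ℝ) = ∑ p : α × β, (Q p - m₁ p.1 * m₂ p.2) := by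
        rw [sum_sub_distrib, hQ.2, hprod, sub_self]
    _ ≤ mutInfo Q := sum_le_sum fun p _ => by
        rcases (hQ.1 p).eq_or_lt with h | h
        · rw [← h, zero_sub, zero_mul, neg_nonpos]
          exact mul_nonneg (h.le.trans (hle₁ p)) (h.le.trans (hle₂ p))
        · exact sub_le_mul_log_div h.le (mul_pos (h.trans_le (hle₁ p)) (h.trans_le (hle₂ p)))

-- Shadows the ambient `variable`, whose instances most lemmas below do not use.
variable {X : Fin m → Type} {Y : Type} {A : Finset (Fin m)}

lemma restr_surjective [∀ i, Nonempty (X i)] (A : Finset (Fin m)) :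
    Function.Surjective (restr (X := X) A) :=
  fun xA => ⟨fun i => if h : i ∈ A then xA ⟨i, h⟩ else Classical.arbitrary _, by
    funext i
    simp [restr, i.2]⟩

variable [∀ i, Fintype (X i)] [∀ i, DecidableEq (X i)] {P : (∀ i, X i) → ℝ}
  {d : (∀ i, X i) → Y → ℝ}

def jointA (P : (∀ i, X i) → ℝ) (A : Finset (Fin m)) (W : (∀ i : A, X i.1) → Y → ℝ) :
    (∀ i : A, X i.1) × Y → ℝ :=
  fun p => margA P A p.1 * W p.1 p.2

lemma sum_mul_sum_restr_eq (f : (∀ i, X i) → ℝ) (g : (∀ i : A, X i.1) → ℝ) :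
    ∑ xA, g xA * ∑ x, (if restr A x = xA then f x else 0) = ∑ x, g (restr A x) * f x := by
  simp_rw [mul_sum]
  rw [sum_comm]
  simp [mul_ite]

lemma sum_margA (P : (∀ i, X i) → ℝ) (A : Finset (Fin m)) :
    ∑ xA, margA P A xA = ∑ x, P x := by
  simpa [margA] using sum_mul_sum_restr_eq (A := A) P fun _ => 1

lemma margA_nonneg (hP : ∀ x, 0 ≤ P x) (xA : ∀ i : A, X i.1) : 0 ≤ margA P A xA :=
  sum_nonneg fun x _ => by split <;> simp [hP]

lemma margA_pos [∀ i, Nonempty (X i)] (hfull : ∀ x, 0 < P x) (xA : ∀ i : A, X i.1) :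
    0 < margA P A xA := by
  obtain ⟨x, rfl⟩ := restr_surjective A xA
  calc 0 < P x := hfull x
    _ = if restr A x = restr A x then P x else 0 := (if_pos rfl).symm
    _ ≤ margA P A (restr A x) :=
      single_le_sum (f := fun x' => if restr A x' = restr A x then P x' else 0)
        (fun x' _ => by split <;> simp [(hfull x').le]) (mem_univ x)

lemma margA_mul_dAk [∀ i, Nonempty (X i)] (hfull : ∀ x, 0 < P x) (xA : ∀ i : A, X i.1)
    (y : Y) : margA P A xA * dAk P d A xA y = ∑ x, if restr A x = xA then P x * d x y else 0 := by
  rw [dAk, mul_div_cancel₀ _ (margA_pos hfull xA).ne']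

lemma jointA_div_margA [∀ i, Nonempty (X i)] (hfull : ∀ x, 0 < P x)
    (Q : (∀ i : A, X i.1) × Y → ℝ) :
    jointA P A (fun xA y => Q (xA, y) / margA P A xA) = Q :=
  funext fun p => mul_div_cancel₀ _ (margA_pos hfull p.1).ne'

variable [Fintype Y]

def distA (P : (∀ i, X i) → ℝ) (d : (∀ i, X i) → Y → ℝ) (A : Finset (Fin m))
    (Q : (∀ i : A, X i.1) × Y → ℝ) : ℝ :=
  ∑ p, Q p * dAk P d A p.1 p.2

lemma isPMF_jointA (hP : IsPMF P) {W : (∀ i : A, X i.1) → Y → ℝ} (hW : ∀ xA, IsPMF (W xA)) :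
    IsPMF (jointA P A W) := by
  refine ⟨fun p => mul_nonneg (margA_nonneg hP.1 p.1) ((hW p.1).1 p.2), ?_⟩
  simp only [jointA, Fintype.sum_prod_type, ← mul_sum, (hW _).2, mul_one, sum_margA, hP.2]

lemma sum_jointA {W : (∀ i : A, X i.1) → Y → ℝ} (hW : ∀ xA, IsPMF (W xA))
    (xA : ∀ i : A, X i.1) : ∑ y, jointA P A W (xA, y) = margA P A xA := by
  simp only [jointA, ← mul_sum, (hW xA).2, mul_one]

lemma isPMF_div_margA [∀ i, Nonempty (X i)] (hfull : ∀ x, 0 < P x)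
    {Q : (∀ i : A, X i.1) × Y → ℝ} (hQ : ∀ p, 0 ≤ Q p)
    (hmarg : ∀ xA, ∑ y, Q (xA, y) = margA P A xA) (xA : ∀ i : A, X i.1) :
    IsPMF fun y => Q (xA, y) / margA P A xA :=
  ⟨fun y => div_nonneg (hQ _) (margA_pos hfull xA).le, by
    rw [← sum_div, hmarg, div_self (margA_pos hfull xA).ne']⟩

lemma distA_jointA [∀ i, Nonempty (X i)] (hfull : ∀ x, 0 < P x)
    (W : (∀ i : A, X i.1) → Y → ℝ) :
    distA P d A (jointA P A W) = ∑ x, ∑ y, P x * W (restr A x) y * d x y := by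
  calc distA P d A (jointA P A W)
      = ∑ y, ∑ xA, W xA y * (margA P A xA * dAk P d A xA y) := by
        rw [distA, Fintype.sum_prod_type, sum_comm]
        simp only [jointA]
        exact sum_congr rfl fun _ _ => sum_congr rfl fun _ _ => by ring
    _ = ∑ y, ∑ x, W (restr A x) y * (P x * d x y) := by
        simp only [margA_mul_dAk hfull, sum_mul_sum_restr_eq]
    _ = ∑ x, ∑ y, P x * W (restr A x) y * d x y := by
        rw [sum_comm]
        exact sum_congr rfl fun _ _ => sum_congr rfl fun _ _ => by ring

lemma DminA_le_distA [Nonempty Y] {Q : (∀ i : A, X i.1) × Y → ℝ} (hQ : ∀ p, 0 ≤ Q p)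
    (hmarg : ∀ xA, ∑ y, Q (xA, y) = margA P A xA) : DminA P d A ≤ distA P d A Q := by
  rw [DminA, distA, Fintype.sum_prod_type]
  refine sum_le_sum fun xA _ => ?_
  rw [← hmarg, sum_mul]
  exact sum_le_sum fun y _ => mul_le_mul_of_nonneg_left (inf'_le _ (mem_univ y)) (hQ _)

-- The minimum `Δ_min,A` is attained by the deterministic channel `x_A ↦ argmin_y d_A(x_A, y)`.
lemma exists_distA_eq_DminA [Nonempty Y] (hP : IsPMF P) :
    ∃ Q : (∀ i : A, X i.1) × Y → ℝ, IsPMF Q ∧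
      (∀ xA, ∑ y, Q (xA, y) = margA P A xA) ∧ distA P d A Q = DminA P d A := by
  classical
  choose y₀ _ hy₀ using fun xA : ∀ i : A, X i.1 =>
    exists_mem_eq_inf' univ_nonempty fun y => dAk P d A xA y
  refine ⟨fun p => if p.2 = y₀ p.1 then margA P A p.1 else 0,
    ⟨fun p => ite_nonneg (margA_nonneg hP.1 _) le_rfl, ?_⟩, fun xA => by simp, ?_⟩
  · simp [Fintype.sum_prod_type, sum_margA, hP.2]
  · simp [distA, DminA, Fintype.sum_prod_type, hy₀]

lemma RAk_nonneg (P : (∀ i, X i) → ℝ) (d : (∀ i, X i) → Y → ℝ) (A : Finset (Fin m)) (Δ : ℝ) :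
    0 ≤ RAk P d A Δ :=
  Real.sInf_nonneg fun _ ⟨_, hQ, _, _, hI⟩ => hI ▸ mutInfo_nonneg hQ

lemma RAk_le_mutInfo {Δ : ℝ} {Q : (∀ i : A, X i.1) × Y → ℝ} (hQ : IsPMF Q)
    (hmarg : ∀ xA, ∑ y, Q (xA, y) = margA P A xA) (hdist : distA P d A Q ≤ Δ) :
    RAk P d A Δ ≤ mutInfo Q :=
  csInf_le ⟨0, by rintro _ ⟨Q', hQ', -, -, rfl⟩; exact mutInfo_nonneg hQ'⟩ ⟨Q, hQ, hmarg, hdist, rfl⟩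

lemma exists_mutInfo_lt_RAk_add [Nonempty Y] (hP : IsPMF P) {Δ ε : ℝ}
    (hΔ : DminA P d A ≤ Δ) (hε : 0 < ε) :
    ∃ Q : (∀ i : A, X i.1) × Y → ℝ, IsPMF Q ∧ (∀ xA, ∑ y, Q (xA, y) = margA P A xA) ∧
      distA P d A Q ≤ Δ ∧ mutInfo Q < RAk P d A Δ + ε := by
  obtain ⟨Q₀, hQ₀, hmarg₀, hdist₀⟩ := exists_distA_eq_DminA (d := d) (A := A) hP
  have hlt : RAk P d A Δ < RAk P d A Δ + ε := lt_add_of_pos_right _ hε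
  rw [RAk] at hlt
  obtain ⟨_, ⟨Q, hQ, hmarg, hdist, rfl⟩, hlt⟩ :=
    exists_lt_of_csInf_lt (by exact ⟨_, Q₀, hQ₀, hmarg₀, hdist₀.trans_le hΔ, rfl⟩) hlt
  exact ⟨Q, hQ, hmarg, hdist, hlt⟩

variable {k : ℕ} {PS : SetsK m k → ℝ}

lemma expDistIRS_eq [∀ i, Nonempty (X i)] (hfull : ∀ x, 0 < P x)
    (W : ∀ A : SetsK m k, (∀ i : A.1, X i.1) → Y → ℝ) :
    expDistIRS k P d PS W = ∑ A, PS A * distA P d A.1 (jointA P A.1 (W A)) := by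
  simp only [expDistIRS, distA_jointA hfull, mul_sum]
  exact sum_congr rfl fun _ _ => sum_congr rfl fun _ _ => sum_congr rfl fun _ _ => by ring

lemma condMI_eq_sum_mutInfo_jointA (W : ∀ A : SetsK m k, (∀ i : A.1, X i.1) → Y → ℝ) :
    condMI k P PS W = ∑ A, PS A * mutInfo (jointA P A.1 (W A)) :=
  rfl

lemma condMI_nonneg (hP : IsPMF P) (hPS : IsPMF PS)
    {W : ∀ A : SetsK m k, (∀ i : A.1, X i.1) → Y → ℝ} (hW : IsKernelW k W) :
    0 ≤ condMI k P PS W :=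
  sum_nonneg fun A _ => mul_nonneg (hPS.1 A) (mutInfo_nonneg (isPMF_jointA hP (hW A)))

lemma sum_RAk_distA_le_condMI (hP : IsPMF P) (hPS : IsPMF PS)
    {W : ∀ A : SetsK m k, (∀ i : A.1, X i.1) → Y → ℝ} (hW : IsKernelW k W) :
    ∑ A, PS A * RAk P d A.1 (distA P d A.1 (jointA P A.1 (W A))) ≤ condMI k P PS W :=
  sum_le_sum fun A _ => mul_le_mul_of_nonneg_left
    (RAk_le_mutInfo (isPMF_jointA hP (hW A)) (sum_jointA (hW A)) le_rfl) (hPS.1 A)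

lemma exists_isKernelW_condMI_le_add [∀ i, Nonempty (X i)] [Nonempty Y] (hP : IsPMF P)
    (hfull : ∀ x, 0 < P x) (hPS : IsPMF PS) {Δf : SetsK m k → ℝ}
    (hΔf : ∀ A, DminA P d A.1 ≤ Δf A) {ε : ℝ} (hε : 0 < ε) :
    ∃ W : ∀ A : SetsK m k, (∀ i : A.1, X i.1) → Y → ℝ, IsKernelW k W ∧
      expDistIRS k P d PS W ≤ ∑ A, PS A * Δf A ∧
      condMI k P PS W ≤ ∑ A, PS A * RAk P d A.1 (Δf A) + ε := by
  choose Q hQ hmarg hdist hI using fun A : SetsK m k => exists_mutInfo_lt_RAk_add hP (hΔf A) hε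
  refine ⟨fun A xA y => Q A (xA, y) / margA P A.1 xA,
    fun A => isPMF_div_margA hfull (hQ A).1 (hmarg A), ?_, ?_⟩
  · rw [expDistIRS_eq hfull]
    simp only [jointA_div_margA hfull]
    exact sum_le_sum fun A _ => mul_le_mul_of_nonneg_left (hdist A) (hPS.1 A)
  · calc condMI k P PS _ = ∑ A, PS A * mutInfo (Q A) := by
          simp only [condMI_eq_sum_mutInfo_jointA, jointA_div_margA hfull]
      _ ≤ ∑ A, PS A * (RAk P d A.1 (Δf A) + ε) :=
          sum_le_sum fun A _ => mul_le_mul_of_nonneg_left (hI A).le (hPS.1 A)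
      _ = ∑ A, PS A * RAk P d A.1 (Δf A) + ε := by
          simp only [mul_add, sum_add_distrib, ← sum_mul, hPS.2, one_mul]

end

theorem stmt8_general (k : ℕ)
    (P : (∀ i, X i) → ℝ) (hP : IsPMF P) (hfull : ∀ x, 0 < P x)
    (d : (∀ i, X i) → Y → ℝ) (Δ : ℝ) :
    Ri k P d Δ =
      sInf {r | ∃ (PS : SetsK m k → ℝ) (Δf : SetsK m k → ℝ), IsPMF PS ∧
        (∀ A, DminA P d A.1 ≤ Δf A) ∧ (∑ A, PS A * Δf A) ≤ Δ ∧
        (∑ A, PS A * RAk P d A.1 (Δf A)) = r} := by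
  refine csInf_eq_csInf_of_forall_exists_le_add ?_ ?_ ?_ ?_
  · exact ⟨0, by rintro _ ⟨PS, W, hPS, hW, -, rfl⟩; exact condMI_nonneg hP hPS hW⟩
  · exact ⟨0, by
      rintro _ ⟨PS, Δf, hPS, -, -, rfl⟩
      exact Finset.sum_nonneg fun A _ => mul_nonneg (hPS.1 A) (RAk_nonneg P d A.1 (Δf A))⟩
  · rintro _ ⟨PS, Δf, hPS, hΔf, hsum, rfl⟩ ε hε
    obtain ⟨W, hW, hdist, hI⟩ := exists_isKernelW_condMI_le_add hP hfull hPS hΔf hε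
    exact ⟨_, ⟨PS, W, hPS, hW, hdist.trans hsum, rfl⟩, hI⟩
  · rintro _ ⟨PS, W, hPS, hW, hdist, rfl⟩
    refine ⟨_, ⟨PS, fun A => distA P d A.1 (jointA P A.1 (W A)), hPS,
      fun A => DminA_le_distA (isPMF_jointA hP (hW A)).1 (sum_jointA (hW A)), ?_, rfl⟩,
      sum_RAk_distA_le_condMI hP hPS hW⟩
    rwa [← expDistIRS_eq hfull]

/-- `R_i(Δ)` equals the minimum of `Σ_A P_S(A) R_A(Δ_A)` over pmfs `P_S`
on `𝒜_k` and distortion allocations `(Δ_A)` with `Δ_A ≥ Δ_min,A` and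
`Σ_A P_S(A) Δ_A ≤ Δ`. -/
theorem stmt8 (k : ℕ) (hk1 : 1 ≤ k) (hkm : k ≤ m)
    (P : (∀ i, X i) → ℝ) (hP : IsPMF P) (hfull : ∀ x, 0 < P x)
    (d : (∀ i, X i) → Y → ℝ) (hd : ∀ x y, 0 ≤ d x y) (Δ : ℝ)
    (hmin : sInf (Set.range fun A : SetsK m k => DminA P d A.1) ≤ Δ)
    (hmax : Δ ≤ Finset.univ.inf' Finset.univ_nonempty (fun y => ∑ x, P x * d x y)) :
    Ri k P d Δ =
      sInf {r | ∃ (PS : SetsK m k → ℝ) (Δf : SetsK m k → ℝ), IsPMF PS ∧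
        (∀ A, DminA P d A.1 ≤ Δf A) ∧ (∑ A, PS A * Δf A) ≤ Δ ∧
        (∑ A, PS A * RAk P d A.1 (Δf A)) = r} :=
  stmt8_general k P hP hfull d Δ
end
end
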